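/- Let G be an infinite group with identity e and let A be a subset of G such that A = A^{-1} and e ∈ A. Then there exist two thin subsets X and Y of G such that ∆(X ∪ Y) = A. -/

import Mathlib

open Pointwise

/-- The combinatorial derivation `∆(A) = {g ∈ G : gA ∩ A is infinite}`. -/
def combDer {G : Type*} [Group G] (A : Set G) : Set G :=
  {g : G | (g • A ∩ A).Infinite}

/-- A subset `B` of a group `G` is thin if `gB ∩ B` is finite for each `g ≠ 1`. -/
def IsThinSub {G : Type*} [Group G] (B : Set G) : Prop :=
  ∀ g : G, g ≠ 1 → (g • B ∩ B).Finite

/-!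
Index the construction by the initial ordinal of `#G`, labelled by `a : I → A` so that every
element of `A` occurs infinitely often, and choose `x i` by transfinite recursion so that the two
new points `x i` and `a i * x i` avoid `B * B⁻¹ * B`, where `B` is the set of all earlier points.
Put `X = {x i}` and `Y = {a i * x i}`. If `g ∈ A`, then `g * x i = a i * x i` for the infinitely
many `i` labelled `g`. Conversely, if `g * w = w'` with `w`, `w'` on different levels, then the
choice of the later point forces the higher level to be the same for all such pairs, so
`g (X ∪ Y) ∩ (X ∪ Y)` is finite unless `g` moves a point of some level `{x i, a i * x i}` onto
that level, i.e. unless `g ∈ {1, a i, (a i)⁻¹} ⊆ A`.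
-/

open Set Cardinal

universe u

theorem iUnion_pair_eq_range_union_range {ι α : Type*} (f g : ι → α) :
    ⋃ i, ({f i, g i} : Set α) = range f ∪ range g := by
  simp only [insert_eq, iUnion_union_distrib, iUnion_singleton_eq_range]

section Sparse

variable {G I : Type*} [Group G] [LinearOrder I]

def IsSparseFamily (S : I → Set G) : Prop :=
  ∀ i, Disjoint (S i) ((⋃ j : Iio i, S j) * (⋃ j : Iio i, S j)⁻¹ * ⋃ j : Iio i, S j)

variable {S : I → Set G}

theorem mul_inv_mul_mem_of_lt {i j₁ j₂ j₃ : I} {w₁ w₂ w₃ : G} (h₁ : j₁ < i) (h₂ : j₂ < i)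
    (h₃ : j₃ < i) (hw₁ : w₁ ∈ S j₁) (hw₂ : w₂ ∈ S j₂) (hw₃ : w₃ ∈ S j₃) :
    w₁ * w₂⁻¹ * w₃ ∈ (⋃ j : Iio i, S j) * (⋃ j : Iio i, S j)⁻¹ * ⋃ j : Iio i, S j :=
  mul_mem_mul (mul_mem_mul (mem_iUnion.2 ⟨⟨j₁, h₁⟩, hw₁⟩)
    (inv_mem_inv.2 (mem_iUnion.2 ⟨⟨j₂, h₂⟩, hw₂⟩))) (mem_iUnion.2 ⟨⟨j₃, h₃⟩, hw₃⟩)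

theorem IsSparseFamily.mono {T : I → Set G} (hT : IsSparseFamily T) (h : ∀ i, S i ⊆ T i) :
    IsSparseFamily S := fun i => by
  have hB : (⋃ j : Iio i, S j) ⊆ ⋃ j : Iio i, T j := iUnion_mono fun j => h j
  exact (hT i).mono (h i) (mul_subset_mul (mul_subset_mul hB (inv_subset_inv.2 hB)) hB)

theorem IsSparseFamily.injective (hS : IsSparseFamily S) {u : I → G} (hu : ∀ i, u i ∈ S i) :
    Function.Injective u := by
  intro i j hij
  by_contra hne
  wlog hji : j < i generalizing i j
  · exact this hij.symm (Ne.symm hne) (lt_of_le_of_ne (not_lt.1 hji) hne)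
  refine disjoint_left.1 (hS i) (hu i) ?_
  simpa [hij] using mul_inv_mul_mem_of_lt hji hji hji (hu j) (hu j) (hu j)

theorem IsSparseFamily.subsingleton_levels (hS : IsSparseFamily S) (g : G) :
    {i | ∃ j < i, ∃ w ∈ S j, g * w ∈ S i}.Subsingleton := by
  suffices h : ∀ i ∈ {i | ∃ j < i, ∃ w ∈ S j, g * w ∈ S i},
      ∀ i' ∈ {i | ∃ j < i, ∃ w ∈ S j, g * w ∈ S i}, ¬ i < i' from
    fun i hi i' hi' => le_antisymm (not_lt.1 (h i' hi' i hi)) (not_lt.1 (h i hi i' hi'))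
  rintro i ⟨j, hji, w, hw, hgw⟩ i' ⟨j', hj'i', w', hw', hgw'⟩ hii'
  refine disjoint_left.1 (hS i') hgw' ?_
  rw [show g * w' = g * w * w⁻¹ * w' by group]
  exact mul_inv_mul_mem_of_lt hii' (hji.trans hii') hj'i' hgw hw hw'

theorem IsSparseFamily.finite_smul_iUnion_inter (hS : IsSparseFamily S)
    (hfin : ∀ i, (S i).Finite) {g : G} (hg : ∀ i, Disjoint (g • S i) (S i)) :
    (g • (⋃ i, S i) ∩ ⋃ i, S i).Finite := by
  refine (((hS.subsingleton_levels g).finite.biUnion fun i _ => hfin i).union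
    (((hS.subsingleton_levels g⁻¹).finite.biUnion fun i _ => hfin i).smul_set (a := g))).subset ?_
  rintro _ ⟨⟨w, hw, rfl⟩, hgw⟩
  obtain ⟨j, hwj⟩ := mem_iUnion.1 hw
  obtain ⟨i, hgwi⟩ := mem_iUnion.1 hgw
  rcases lt_trichotomy j i with hji | rfl | hij
  · exact Or.inl (mem_biUnion ⟨j, hji, w, hwj, hgwi⟩ hgwi)
  · exact absurd hgwi (disjoint_left.1 (hg j) (smul_mem_smul_set hwj))
  · exact Or.inr (smul_mem_smul_set (mem_biUnion ⟨i, hij, g • w, hgwi, by simpa⟩ hwj))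

theorem IsSparseFamily.isThinSub_iUnion (hS : IsSparseFamily S)
    (hsub : ∀ i, (S i).Subsingleton) : IsThinSub (⋃ i, S i) := fun g hg =>
  hS.finite_smul_iUnion_inter (fun i => (hsub i).finite) fun i => disjoint_left.2 <| by
    rintro _ ⟨w, hw, rfl⟩ hgw
    exact hg (mul_eq_right.1 (hsub i hgw hw))

end Sparse

theorem exists_transfinite_choice {I α : Type*} [Preorder I] [WellFoundedLT I]
    (good : (i : I) → (Iio i → α) → α → Prop) (h : ∀ i p, ∃ a, good i p a) :
    ∃ f : I → α, ∀ i, good i (fun j => f j) (f i) := by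
  choose c hc using h
  refine ⟨WellFoundedLT.fix fun i prev => c i fun j => prev j j.2, fun i => ?_⟩
  rw [WellFoundedLT.fix_eq]
  exact hc _ _

section Construction

variable {G : Type u} [Group G] [Infinite G]

theorem exists_pair_disjoint_mul_inv_mul (a : G) {B : Set G} (hB : #B < #G) :
    ∃ x, Disjoint {x, a * x} (B * B⁻¹ * B) := by
  set Q := B * B⁻¹ * B
  have hQ : #Q < #G := (mk_mul_le.trans (mul_le_mul' mk_mul_le le_rfl)).trans_lt <|
    mul_lt_of_lt (aleph0_le_mk G) (mul_lt_of_lt (aleph0_le_mk G) hB (by rwa [mk_inv])) hB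
  have hQ' : #(Q ∪ a⁻¹ • Q : Set G) < #G :=
    (mk_union_le _ _).trans_lt (add_lt_of_lt (aleph0_le_mk G) hQ (by rwa [mk_smul_set]))
  obtain ⟨x, hx⟩ : (Q ∪ a⁻¹ • Q)ᶜ.Nonempty := by
    rw [nonempty_compl]
    rintro h
    rw [h, mk_univ] at hQ'
    exact hQ'.false
  refine ⟨x, disjoint_left.2 ?_⟩
  rintro y (rfl | rfl) hy
  · exact hx (Or.inl hy)
  · exact hx (Or.inr ⟨_, hy, by simp⟩)

theorem exists_isSparseFamily {I : Type u} [LinearOrder I] [WellFoundedLT I]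
    (hI : ∀ i : I, #(Iio i) < #G) (a : I → G) :
    ∃ x : I → G, IsSparseFamily fun i => {x i, a i * x i} := by
  refine exists_transfinite_choice (fun i p x => Disjoint {x, a i * x}
    ((⋃ j : Iio i, {p j, a j * p j}) * (⋃ j : Iio i, {p j, a j * p j})⁻¹ *
      ⋃ j : Iio i, {p j, a j * p j})) fun i p => exists_pair_disjoint_mul_inv_mul (a i) ?_
  rw [iUnion_pair_eq_range_union_range]
  exact (mk_union_le _ _).trans_lt (add_lt_of_lt (aleph0_le_mk G)
    (mk_range_le.trans_lt (hI i)) (mk_range_le.trans_lt (hI i)))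

end Construction

theorem exists_labelling_with_infinite_fibers {α I : Type u} [Infinite I] {s : Set α}
    (hs : s.Nonempty) (h : #s ≤ #I) : ∃ a : I → α, (∀ i, a i ∈ s) ∧ ∀ g ∈ s, {i | a i = g}.Infinite := by
  have : Nonempty (s × ℕ) := ⟨(⟨_, hs.some_mem⟩, 0)⟩
  obtain ⟨e⟩ : Nonempty (s × ℕ ↪ I) := by
    rw [← le_def]
    calc #(s × ℕ) = #s * ℵ₀ := by simp
      _ ≤ #I * #I := mul_le_mul' h (aleph0_le_mk I)
      _ = #I := mul_eq_self (aleph0_le_mk I)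
  have hσ := Function.invFun_surjective e.injective
  refine ⟨fun i => (Function.invFun e i).1, fun i => (Function.invFun e i).1.2, fun g hg => ?_⟩
  refine Infinite.of_image (Function.invFun e) ?_
  rw [show {i | ((Function.invFun e i).1 : α) = g} = Function.invFun e ⁻¹' {p | p.1 = g} from rfl,
    image_preimage_eq _ hσ]
  refine (infinite_range_of_injective (f := fun n : ℕ => ((⟨g, hg⟩ : s), n)) ?_).mono ?_
  · intro m n hmn; simpa using hmn
  · rintro _ ⟨n, rfl⟩; rfl

theorem disjoint_smul_pair {G : Type*} [Group G] {g a : G} (h₁ : g ≠ 1) (ha : g ≠ a)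
    (ha' : g * a ≠ 1) (x : G) : Disjoint (g • ({x, a * x} : Set G)) {x, a * x} := by
  simp only [disjoint_left, smul_set_insert, smul_set_singleton, mem_insert_iff,
    mem_singleton_iff, smul_eq_mul]
  rintro _ (rfl | rfl)
  all_goals simp_all [← mul_assoc, eq_comm]

section Derivation

variable {G I : Type*} [Group G] [LinearOrder I] {x a : I → G}

theorem mem_combDer_iUnion_pair (hx : IsSparseFamily fun i => {x i, a i * x i}) {g : G}
    (hg : {i | a i = g}.Infinite) : g ∈ combDer (⋃ i, ({x i, a i * x i} : Set G)) := by
  refine (hg.image (hx.injective (u := fun i => a i * x i)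
    fun i => mem_insert_of_mem _ rfl).injOn).mono ?_
  rintro _ ⟨i, rfl : a i = g, rfl⟩
  exact ⟨smul_mem_smul_set (mem_iUnion.2 ⟨i, mem_insert _ _⟩),
    mem_iUnion.2 ⟨i, mem_insert_of_mem _ rfl⟩⟩

theorem combDer_iUnion_pair_subset (hx : IsSparseFamily fun i => {x i, a i * x i})
    {A : Set G} (hsymm : A = A⁻¹) (hone : 1 ∈ A) (haA : ∀ i, a i ∈ A) :
    combDer (⋃ i, ({x i, a i * x i} : Set G)) ⊆ A := by
  intro g hg
  by_contra hgA
  have hg1 : g ≠ 1 := fun h => hgA (h ▸ hone)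
  refine hg (hx.finite_smul_iUnion_inter (fun i => toFinite _)
    fun i => disjoint_smul_pair hg1 ?_ ?_ _)
  · rintro rfl
    exact hgA (haA i)
  · intro h
    have : a i ∈ A⁻¹ := hsymm ▸ haA i
    exact hgA (eq_inv_of_mul_eq_one_left h ▸ this)

end Derivation

/-- If `A` is a symmetric subset of an infinite group `G` containing the identity,
then `A = ∆(X ∪ Y)` for some thin subsets `X`, `Y` of `G`. -/
theorem symm_set_eq_combDer_union_of_thin
    {G : Type*} [Group G] [Infinite G] (A : Set G)
    (hsymm : A = A⁻¹) (hone : (1 : G) ∈ A) :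
    ∃ X Y : Set G, IsThinSub X ∧ IsThinSub Y ∧ combDer (X ∪ Y) = A := by
  have : Infinite (#G).ord.ToType := infinite_iff.2 (by simp)
  obtain ⟨a, haA, hfib⟩ := exists_labelling_with_infinite_fibers (I := (#G).ord.ToType) ⟨1, hone⟩
    (by simp [mk_set_le])
  obtain ⟨x, hx⟩ := exists_isSparseFamily (fun i : (#G).ord.ToType => by simpa using mk_Iio_lt i) a
  refine ⟨range x, range fun i => a i * x i, ?_, ?_, ?_⟩
  · simpa using (hx.mono fun i => singleton_subset_iff.2 (mem_insert _ _)).isThinSub_iUnion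
      fun i => subsingleton_singleton
  · simpa using (hx.mono fun i => subset_insert _ _).isThinSub_iUnion fun i => subsingleton_singleton
  rw [← iUnion_pair_eq_range_union_range]
  exact (combDer_iUnion_pair_subset hx hsymm hone haA).antisymm
    fun g hg => mem_combDer_iUnion_pair hx (hfib g hg)
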